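/- arXiv:math/0009147 — 4 statements merged into one kernel-verified Lean document; each statement's English description precedes it below -/
import Mathlib

section
/- Let Λ be a sofic shift with past-equivalence classes ℰ_1,...,ℰ_m. For every word μ appearing in Λ, σ^{|μ|}(U_μ) = ⋃_{i : μℰ_i ≠ ∅} ℰ_i; in particular σ^{|μ|}(U_μ) is a union of past-equivalence classes, and consequently there are only finitely many distinct sets of the form σ^{|μ|}(U_μ) as μ ranges over all words appearing in Λ. -/
open scoped Classical

variable {A : Type*}

/-- Prepend a finite word to a right-infinite sequence. -/
def prepend (μ : List A) (x : ℕ → A) : ℕ → A :=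
  fun n => if h : n < μ.length then μ.get ⟨n, h⟩ else x (n - μ.length)

/-- The one-sided shift map. -/
def shift (x : ℕ → A) : ℕ → A := fun n => x (n + 1)

/-- `Λ_l(x)`: words of length at most `l` that can precede `x` in `X`. -/
def pastSet (X : Set (ℕ → A)) (l : ℕ) (x : ℕ → A) : Set (List A) :=
  {μ | μ.length ≤ l ∧ prepend μ x ∈ X}

/-- The cylinder set `U_μ`. -/
def cyl (X : Set (ℕ → A)) (μ : List A) : Set (ℕ → A) :=
  {x | x ∈ X ∧ ∀ i : Fin μ.length, x i = μ.get i}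

/-- `σ^{|μ|}(U_μ)`. -/
def shiftImg (X : Set (ℕ → A)) (μ : List A) : Set (ℕ → A) :=
  shift^[μ.length] '' cyl X μ

/-- `μℰ = {μx ∈ X : x ∈ ℰ}`. -/
def wordAct (X : Set (ℕ → A)) (μ : List A) (E : Set (ℕ → A)) : Set (ℕ → A) :=
  {y | y ∈ X ∧ ∃ x ∈ E, y = prepend μ x}

/-- An edge of the left Krieger cover graph: a pair of a label `j ∈ 𝔄` and a
range vertex `i` such that `jℰ_i ≠ ∅`. -/
abbrev KEdge (X : Set (ℕ → A)) (m : ℕ) (ℰ : Fin m → Set (ℕ → A)) :=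
  {p : A × Fin m // (wordAct X [p.1] (ℰ p.2)).Nonempty}

/-- The label of an edge. -/
def KEdge.lbl {X : Set (ℕ → A)} {m : ℕ} {ℰ : Fin m → Set (ℕ → A)}
    (e : KEdge X m ℰ) : A := e.1.1

/-- The range of an edge. -/
def KEdge.rng {X : Set (ℕ → A)} {m : ℕ} {ℰ : Fin m → Set (ℕ → A)}
    (e : KEdge X m ℰ) : Fin m := e.1.2

lemma shift_iterate_apply (x : ℕ → A) (n k : ℕ) : shift^[n] x k = x (k + n) := by
  induction n generalizing x k with
  | zero => simp
  | succ n ih =>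
    rw [Function.iterate_succ_apply, ih]
    simp only [shift]
    congr 1

/-- for a sofic shift, `σ^{|μ|}(U_μ)` is the union of the
past-equivalence classes `ℰ_i` with `μℰ_i ≠ ∅`, and there are only finitely
many distinct sets of this form. -/
theorem shiftImg_eq_iUnion_classes [Fintype A] (X : Set (ℕ → A))
    (l m : ℕ) (ℰ : Fin m → Set (ℕ → A))
    (hshift : ∀ x ∈ X, shift x ∈ X)
    (hsofic : ∀ k, l ≤ k → ∀ x ∈ X, ∀ y ∈ X,
      (pastSet X l x = pastSet X l y ↔ pastSet X k x = pastSet X k y))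
    (hclass : ∀ i : Fin m, ∃ x ∈ X,
      ℰ i = {y | y ∈ X ∧ pastSet X l y = pastSet X l x})
    (hcover : ∀ x ∈ X, ∃ i, x ∈ ℰ i)
    (hdisj : ∀ i j : Fin m, i ≠ j → Disjoint (ℰ i) (ℰ j)) :
    (∀ μ : List A, (cyl X μ).Nonempty →
      shiftImg X μ = ⋃ i ∈ {i : Fin m | (wordAct X μ (ℰ i)).Nonempty}, ℰ i) ∧
    {S : Set (ℕ → A) | ∃ μ : List A, (cyl X μ).Nonempty ∧ S = shiftImg X μ}.Finite := by
  have hXsub : ∀ i, ℰ i ⊆ X := by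
    intro i y hy
    obtain ⟨x, hx, hE⟩ := hclass i
    rw [hE] at hy
    exact hy.1
  have hiter : ∀ n, ∀ x ∈ X, shift^[n] x ∈ X := by
    intro n
    induction n with
    | zero => intro x hx; exact hx
    | succ n ih =>
      intro x hx
      rw [Function.iterate_succ_apply]
      exact ih _ (hshift x hx)
  have h1 : ∀ μ : List A, (cyl X μ).Nonempty →
      shiftImg X μ = ⋃ i ∈ {i : Fin m | (wordAct X μ (ℰ i)).Nonempty}, ℰ i := by
    intro μ _
    ext y
    simp only [shiftImg, Set.mem_image, Set.mem_iUnion, Set.mem_setOf_eq]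
    constructor
    · rintro ⟨x, hx, rfl⟩
      obtain ⟨i, hi⟩ := hcover _ (hiter _ x hx.1)
      refine ⟨i, ⟨x, hx.1, shift^[μ.length] x, hi, ?_⟩, hi⟩
      funext k
      simp only [prepend]
      split_ifs with h
      · exact hx.2 ⟨k, h⟩
      · rw [shift_iterate_apply]
        congr 1
        omega
    · rintro ⟨i, ⟨w, hwX, z, hz, hw⟩, hy⟩
      obtain ⟨x0, hx0, hE⟩ := hclass i
      have hy' := hy
      have hz' := hz
      rw [hE] at hy' hz'
      have hyp : pastSet X l y = pastSet X l z := hy'.2.trans hz'.2.symm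
      have hk : pastSet X (max l μ.length) y = pastSet X (max l μ.length) z :=
        (hsofic _ (le_max_left _ _) y (hXsub i hy) z (hXsub i hz)).mp hyp
      have hμz : μ ∈ pastSet X (max l μ.length) z :=
        ⟨le_max_right _ _, hw ▸ hwX⟩
      rw [← hk] at hμz
      have hμy : prepend μ y ∈ X := hμz.2
      refine ⟨prepend μ y, ⟨hμy, ?_⟩, ?_⟩
      · intro j
        simp [prepend, j.isLt]
      · funext k
        rw [shift_iterate_apply]
        simp [prepend]
  refine ⟨h1, ?_⟩
  have hsub : {S : Set (ℕ → A) | ∃ μ : List A, (cyl X μ).Nonempty ∧ S = shiftImg X μ} ⊆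
      (fun T : Set (Fin m) => ⋃ i ∈ T, ℰ i) '' Set.univ := by
    rintro S ⟨μ, hμ, rfl⟩
    exact ⟨_, Set.mem_univ _, (h1 μ hμ).symm⟩
  exact Set.Finite.subset (Set.finite_univ.image _) hsub
end

section
/- Let Λ be a sofic shift with past-equivalence classes ℰ_1,...,ℰ_m. Each class ℰ_i can be written as a finite Boolean combination: there exist finite sets of words M_i and N_i such that ℰ_i = (⋂_{μ∈M_i} σ^{|μ|}(U_μ)) ∩ (⋂_{μ∈N_i} (X_Λ \ σ^{|μ|}(U_μ))). -/
open scoped Classical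

variable {A : Type*}

lemma shift_iter (x : ℕ → A) (k n : ℕ) : (shift^[k]) x n = x (n + k) := by
  induction k generalizing x with
  | zero => simp
  | succ k ih =>
    rw [Function.iterate_succ_apply, ih]
    simp [shift]; ring_nf

lemma prepend_mem_cyl {X : Set (ℕ → A)} {μ : List A} {y : ℕ → A}
    (hx : prepend μ y ∈ X) : prepend μ y ∈ cyl X μ := by
  refine ⟨hx, fun i => ?_⟩
  simp [prepend, i.isLt]

lemma mem_shiftImg_iff (X : Set (ℕ → A)) (μ : List A) (y : ℕ → A) :
    y ∈ shiftImg X μ ↔ prepend μ y ∈ X := by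
  constructor
  · rintro ⟨z, ⟨hzX, hz⟩, rfl⟩
    have : prepend μ (shift^[μ.length] z) = z := by
      funext n
      by_cases h : n < μ.length
      · simpa [prepend, h] using (hz ⟨n, h⟩).symm
      · simp only [prepend, dif_neg h, shift_iter]
        congr 1; omega
    rwa [this]
  · intro h
    refine ⟨prepend μ y, prepend_mem_cyl h, ?_⟩
    funext n
    rw [shift_iter]
    simp [prepend, Nat.not_lt.mpr (Nat.le_add_left _ _)]

lemma prepend_nil (y : ℕ → A) : prepend [] y = y := by
  funext n; simp [prepend]

/-- each past-equivalence class `ℰ_i` of a sofic shift is a finite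
Boolean combination of sets `σ^{|μ|}(U_μ)`. -/
theorem class_eq_boolean_combination [Fintype A] (X : Set (ℕ → A))
    (l m : ℕ) (ℰ : Fin m → Set (ℕ → A))
    (hshift : ∀ x ∈ X, shift x ∈ X)
    (hsofic : ∀ k, l ≤ k → ∀ x ∈ X, ∀ y ∈ X,
      (pastSet X l x = pastSet X l y ↔ pastSet X k x = pastSet X k y))
    (hclass : ∀ i : Fin m, ∃ x ∈ X,
      ℰ i = {y | y ∈ X ∧ pastSet X l y = pastSet X l x})
    (hcover : ∀ x ∈ X, ∃ i, x ∈ ℰ i)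
    (hdisj : ∀ i j : Fin m, i ≠ j → Disjoint (ℰ i) (ℰ j))
    (i : Fin m) :
    ∃ M N : Finset (List A),
      (∀ μ ∈ M, (cyl X μ).Nonempty) ∧ (∀ μ ∈ N, (cyl X μ).Nonempty) ∧
      ℰ i = (⋂ μ ∈ M, shiftImg X μ) ∩ ⋂ μ ∈ N, (X \ shiftImg X μ) := by
  obtain ⟨x₀, hx₀X, hEi⟩ := hclass i
  have hfin : {μ : List A | μ.length ≤ l}.Finite := List.finite_length_le A l
  set Ms : Set (List A) := {μ | μ.length ≤ l ∧ prepend μ x₀ ∈ X} with hMs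
  set Ns : Set (List A) :=
    {μ | μ.length ≤ l ∧ prepend μ x₀ ∉ X ∧ (cyl X μ).Nonempty} with hNs
  have hMfin : Ms.Finite := hfin.subset fun μ h => h.1
  have hNfin : Ns.Finite := hfin.subset fun μ h => h.1
  refine ⟨hMfin.toFinset, hNfin.toFinset, ?_, ?_, ?_⟩
  · intro μ hμ
    rw [Set.Finite.mem_toFinset] at hμ
    exact ⟨prepend μ x₀, prepend_mem_cyl hμ.2⟩
  · intro μ hμ
    rw [Set.Finite.mem_toFinset] at hμ
    exact hμ.2.2
  · rw [hEi]
    ext y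
    simp only [Set.mem_setOf_eq, Set.mem_inter_iff, Set.mem_iInter,
      Set.Finite.mem_toFinset, Set.mem_diff]
    constructor
    · rintro ⟨hyX, hpast⟩
      refine ⟨fun μ hμ => ?_, fun μ hμ => ⟨hyX, fun hy => ?_⟩⟩
      · rw [mem_shiftImg_iff]
        have : μ ∈ pastSet X l x₀ := ⟨hμ.1, hμ.2⟩
        rw [← hpast] at this
        exact this.2
      · rw [mem_shiftImg_iff] at hy
        have : μ ∈ pastSet X l y := ⟨hμ.1, hy⟩
        rw [hpast] at this
        exact hμ.2.1 this.2
    · rintro ⟨hM, hN⟩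
      have hnil : ([] : List A) ∈ Ms := by
        constructor
        · simp
        · rwa [prepend_nil]
      have hyX : y ∈ X := by
        have := hM [] hnil
        rw [mem_shiftImg_iff, prepend_nil] at this
        exact this
      refine ⟨hyX, ?_⟩
      ext μ
      constructor
      · rintro ⟨hlen, hy⟩
        refine ⟨hlen, ?_⟩
        by_contra hx
        have hμN : μ ∈ Ns := ⟨hlen, hx, ⟨prepend μ y, prepend_mem_cyl hy⟩⟩
        exact (hN μ hμN).2 ((mem_shiftImg_iff X μ y).mpr hy)
      · rintro ⟨hlen, hx⟩
        refine ⟨hlen, ?_⟩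
        have := hM μ ⟨hlen, hx⟩
        rwa [mem_shiftImg_iff] at this
end

section
/- Let Λ be a sofic shift, μ a finite word over 𝔄, and i a vertex of the left Krieger cover graph. Then μℰ_i ≠ ∅ if and only if there exists a path α in the left Krieger cover graph with label ℒ(α) = μ and range r(α) = i. Moreover such a path α is unique, and it satisfies μℰ_i ⊆ ℰ_{s(α)}. -/
open scoped Classical

variable {A : Type*}

/-- A path in the left Krieger cover graph: a nonempty list of composable
edges (`r(α_t) = s(α_{t+1})`) with label `μ` and range `i`. -/
def IsKPath {A : Type*} {X : Set (ℕ → A)} {m : ℕ} {ℰ : Fin m → Set (ℕ → A)}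
    (src : KEdge X m ℰ → Fin m) (μ : List A) (i : Fin m)
    (α : List (KEdge X m ℰ)) : Prop :=
  α ≠ [] ∧ List.Chain' (fun e f => e.rng = src f) α ∧
    α.map KEdge.lbl = μ ∧ ∀ e ∈ α.getLast?, e.rng = i

/-! A path is forced by its label and range when read backwards: its last edge is `(μ_n, i)`
and each earlier edge is `(μ_t, s(α_{t+1}))`; this gives uniqueness. Since `σ(X) ⊆ X`,
`μℰ_i = μ_1(μ_2 ⋯ μ_n ℰ_i)`, so induction along the path gives
`μℰ_i ⊆ μ_1 ℰ_{s(α_2)} ⊆ ℰ_{s(α_1)}`. Nonemptiness propagates backwards along a path because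
whether a letter may precede a point depends only on the point's past-equivalence class. -/

theorem shift_prepend_cons (j : A) (ν : List A) (x : ℕ → A) :
    shift (prepend (j :: ν) x) = prepend ν x := by
  funext n
  simp only [shift, prepend, List.length_cons]
  by_cases h : n < ν.length
  · rw [dif_pos (by omega), dif_pos h]
    rfl
  · rw [dif_neg (by omega), dif_neg h]
    congr 1
    omega

theorem prepend_cons (j : A) (ν : List A) (x : ℕ → A) :
    prepend (j :: ν) x = prepend [j] (prepend ν x) := by
  funext n
  cases n <;> simp [prepend]

theorem wordAct_mono (X : Set (ℕ → A)) (μ : List A) {E F : Set (ℕ → A)} (h : E ⊆ F) :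
    wordAct X μ E ⊆ wordAct X μ F := by
  rintro y ⟨hy, x, hx, rfl⟩
  exact ⟨hy, x, h hx, rfl⟩

theorem wordAct_cons {X : Set (ℕ → A)} (hshift : ∀ x ∈ X, shift x ∈ X)
    (j : A) (ν : List A) (E : Set (ℕ → A)) :
    wordAct X (j :: ν) E = wordAct X [j] (wordAct X ν E) := by
  ext y
  constructor
  · rintro ⟨hy, x, hx, rfl⟩
    have hνx : prepend ν x ∈ X := shift_prepend_cons j ν x ▸ hshift _ hy
    exact ⟨hy, prepend ν x, ⟨hνx, x, hx, rfl⟩, prepend_cons j ν x⟩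
  · rintro ⟨hy, _, ⟨-, x, hx, rfl⟩, rfl⟩
    exact ⟨hy, x, hx, (prepend_cons j ν x).symm⟩

/-- `Λ_l` determines `Λ_{l+1}`, which records the letters that may precede a point. -/
theorem prepend_singleton_mem_of_mem_class {X : Set (ℕ → A)} {l m : ℕ}
    {ℰ : Fin m → Set (ℕ → A)}
    (hsofic : ∀ k, l ≤ k → ∀ x ∈ X, ∀ y ∈ X,
      (pastSet X l x = pastSet X l y ↔ pastSet X k x = pastSet X k y))
    (hclass : ∀ i : Fin m, ∃ x ∈ X,
      ℰ i = {y | y ∈ X ∧ pastSet X l y = pastSet X l x})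
    {k : Fin m} {j : A} (hne : (wordAct X [j] (ℰ k)).Nonempty)
    {w : ℕ → A} (hw : w ∈ ℰ k) : prepend [j] w ∈ wordAct X [j] (ℰ k) := by
  obtain ⟨_, hjz, z, hz, rfl⟩ := hne
  obtain ⟨x, -, hℰk⟩ := hclass k
  have hw' : w ∈ {y | y ∈ X ∧ pastSet X l y = pastSet X l x} := hℰk ▸ hw
  rw [hℰk] at hz
  have hpast : pastSet X (l + 1) z = pastSet X (l + 1) w :=
    (hsofic (l + 1) (Nat.le_succ l) z hz.1 w hw'.1).mp (hz.2.trans hw'.2.symm)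
  have hj : [j] ∈ pastSet X (l + 1) z := ⟨by simp, hjz⟩
  rw [hpast] at hj
  exact ⟨hj.2, w, hw, rfl⟩

section KriegerPaths

variable {X : Set (ℕ → A)} {m : ℕ} {ℰ : Fin m → Set (ℕ → A)}
  {src : KEdge X m ℰ → Fin m} {μ : List A} {i : Fin m}

theorem KEdge.ext {e f : KEdge X m ℰ} (hlbl : e.lbl = f.lbl) (hrng : e.rng = f.rng) :
    e = f :=
  Subtype.ext (Prod.ext hlbl hrng)

theorem isKPath_iff {α : List (KEdge X m ℰ)} :
    IsKPath src μ i α ↔ α ≠ [] ∧ α.IsChain (fun e f => e.rng = src f) ∧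
      α.map KEdge.lbl = μ ∧ ∀ e ∈ α.getLast?, e.rng = i :=
  Iff.rfl

theorem not_isKPath_nil : ¬ IsKPath src μ i [] :=
  fun h => h.1 rfl

theorem isKPath_singleton_iff {e : KEdge X m ℰ} :
    IsKPath src μ i [e] ↔ μ = [e.lbl] ∧ e.rng = i := by
  simp [isKPath_iff, eq_comm]

theorem isKPath_cons_cons_iff {j : A} {ν : List A} {e f : KEdge X m ℰ}
    {rest : List (KEdge X m ℰ)} :
    IsKPath src (j :: ν) i (e :: f :: rest) ↔
      e.lbl = j ∧ e.rng = src f ∧ IsKPath src ν i (f :: rest) := by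
  simp only [isKPath_iff, ne_eq, reduceCtorEq, not_false_eq_true, List.isChain_cons_cons,
    List.map_cons, List.cons.injEq, List.getLast?_cons_cons, true_and]
  tauto

theorem IsKPath.eq_map_lbl {α : List (KEdge X m ℰ)} (h : IsKPath src μ i α) :
    μ = α.map KEdge.lbl :=
  h.2.2.1.symm

theorem IsKPath.unique {α β : List (KEdge X m ℰ)} (hα : IsKPath src μ i α)
    (hβ : IsKPath src μ i β) : α = β := by
  induction α generalizing μ β with
  | nil => exact absurd hα not_isKPath_nil
  | cons e α' ih =>
    have hlen : α'.length + 1 = β.length := by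
      simpa [hα.eq_map_lbl] using congrArg List.length hβ.eq_map_lbl
    obtain _ | ⟨e', β'⟩ := β
    · exact absurd hβ not_isKPath_nil
    have hlbl : e.lbl = e'.lbl := by
      simpa using (List.cons.inj (hα.eq_map_lbl.symm.trans hβ.eq_map_lbl)).1
    obtain _ | ⟨f, rest⟩ := α'
    · obtain _ | ⟨_, _⟩ := β'
      · rw [KEdge.ext hlbl ((isKPath_singleton_iff.mp hα).2.trans
          (isKPath_singleton_iff.mp hβ).2.symm)]
      · simp at hlen
    · obtain _ | ⟨f', rest'⟩ := β'
      · simp at hlen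
      obtain rfl := hα.eq_map_lbl
      rw [List.map_cons] at hα hβ
      obtain ⟨-, hef, hα'⟩ := isKPath_cons_cons_iff.mp hα
      obtain ⟨-, hef', hβ'⟩ := isKPath_cons_cons_iff.mp hβ
      have htail := ih hα' hβ'
      obtain ⟨rfl, -⟩ := List.cons.inj htail
      rw [KEdge.ext hlbl (hef.trans hef'.symm), htail]

theorem IsKPath.wordAct_subset_src (hshift : ∀ x ∈ X, shift x ∈ X)
    (hsrc : ∀ e : KEdge X m ℰ, wordAct X [e.lbl] (ℰ e.rng) ⊆ ℰ (src e))
    {e : KEdge X m ℰ} {β : List (KEdge X m ℰ)}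
    (h : IsKPath src μ i (e :: β)) : wordAct X μ (ℰ i) ⊆ ℰ (src e) := by
  induction β generalizing μ e with
  | nil =>
    obtain ⟨rfl, rfl⟩ := isKPath_singleton_iff.mp h
    exact hsrc e
  | cons f rest ih =>
    obtain rfl := h.eq_map_lbl
    rw [List.map_cons] at h ⊢
    obtain ⟨-, hef, htail⟩ := isKPath_cons_cons_iff.mp h
    rw [wordAct_cons hshift, ← htail.eq_map_lbl]
    exact (wordAct_mono X _ (ih htail)).trans (hef ▸ hsrc e)

theorem IsKPath.wordAct_nonempty (hshift : ∀ x ∈ X, shift x ∈ X)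
    (hsrc : ∀ e : KEdge X m ℰ, wordAct X [e.lbl] (ℰ e.rng) ⊆ ℰ (src e)) {l : ℕ}
    (hsofic : ∀ k, l ≤ k → ∀ x ∈ X, ∀ y ∈ X,
      (pastSet X l x = pastSet X l y ↔ pastSet X k x = pastSet X k y))
    (hclass : ∀ i : Fin m, ∃ x ∈ X,
      ℰ i = {y | y ∈ X ∧ pastSet X l y = pastSet X l x})
    {α : List (KEdge X m ℰ)} (h : IsKPath src μ i α) : (wordAct X μ (ℰ i)).Nonempty := by
  induction α generalizing μ with
  | nil => exact absurd h not_isKPath_nil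
  | cons e β ih =>
    obtain _ | ⟨f, rest⟩ := β
    · obtain ⟨rfl, rfl⟩ := isKPath_singleton_iff.mp h
      exact e.2
    obtain rfl := h.eq_map_lbl
    rw [List.map_cons] at h ⊢
    obtain ⟨-, hef, htail⟩ := isKPath_cons_cons_iff.mp h
    obtain ⟨z, hz⟩ := ih htail
    have hz_src : z ∈ ℰ e.rng := hef ▸ htail.wordAct_subset_src hshift hsrc hz
    have hjz := prepend_singleton_mem_of_mem_class hsofic hclass e.2 hz_src
    rw [wordAct_cons hshift, ← htail.eq_map_lbl]
    exact ⟨_, hjz.1, z, hz, rfl⟩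

theorem exists_isKPath_of_wordAct_nonempty (hshift : ∀ x ∈ X, shift x ∈ X)
    (hsrc : ∀ e : KEdge X m ℰ, wordAct X [e.lbl] (ℰ e.rng) ⊆ ℰ (src e)) (hμ : μ ≠ [])
    (hne : (wordAct X μ (ℰ i)).Nonempty) : ∃ α, IsKPath src μ i α := by
  induction μ with
  | nil => exact absurd rfl hμ
  | cons j ν ih =>
    obtain _ | ⟨j', ν'⟩ := ν
    · exact ⟨[⟨(j, i), hne⟩], isKPath_singleton_iff.mpr ⟨rfl, rfl⟩⟩
    obtain ⟨y, hy, z, hz, rfl⟩ := wordAct_cons hshift j _ _ ▸ hne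
    obtain ⟨_ | ⟨f, rest⟩, htail⟩ := ih (List.cons_ne_nil _ _) ⟨z, hz⟩
    · exact absurd htail not_isKPath_nil
    have hz_src : z ∈ ℰ (src f) := htail.wordAct_subset_src hshift hsrc hz
    let e : KEdge X m ℰ := ⟨(j, src f), _, hy, z, hz_src, rfl⟩
    exact ⟨e :: f :: rest, isKPath_cons_cons_iff.mpr ⟨rfl, rfl, htail⟩⟩

end KriegerPaths

theorem wordAct_nonempty_iff_path_general (X : Set (ℕ → A))
    (l m : ℕ) (ℰ : Fin m → Set (ℕ → A))
    (hshift : ∀ x ∈ X, shift x ∈ X)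
    (hsofic : ∀ k, l ≤ k → ∀ x ∈ X, ∀ y ∈ X,
      (pastSet X l x = pastSet X l y ↔ pastSet X k x = pastSet X k y))
    (hclass : ∀ i : Fin m, ∃ x ∈ X,
      ℰ i = {y | y ∈ X ∧ pastSet X l y = pastSet X l x})
    (src : KEdge X m ℰ → Fin m)
    (hsrc : ∀ e : KEdge X m ℰ, wordAct X [e.lbl] (ℰ e.rng) ⊆ ℰ (src e))
    (μ : List A) (hμ : μ ≠ []) (i : Fin m) :
    ((wordAct X μ (ℰ i)).Nonempty ↔ ∃ α, IsKPath src μ i α) ∧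
    (∀ α β, IsKPath src μ i α → IsKPath src μ i β → α = β) ∧
    (∀ α, IsKPath src μ i α → ∀ e₀ ∈ α.head?,
      wordAct X μ (ℰ i) ⊆ ℰ (src e₀)) := by
  refine ⟨⟨exists_isKPath_of_wordAct_nonempty hshift hsrc hμ, ?_⟩,
    fun α β hα hβ => hα.unique hβ, ?_⟩
  · rintro ⟨α, hα⟩
    exact hα.wordAct_nonempty hshift hsrc hsofic hclass
  · rintro (_ | ⟨e, β⟩) hα e₀ he₀
    · exact absurd hα not_isKPath_nil
    obtain rfl : e = e₀ := Option.some.inj he₀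
    exact hα.wordAct_subset_src hshift hsrc

/-- `μℰ_i ≠ ∅` iff there is a path `α` in the left Krieger cover
graph with label `μ` and range `i`; such a path is unique and satisfies
`μℰ_i ⊆ ℰ_{s(α)}`. -/
theorem wordAct_nonempty_iff_path [Fintype A] (X : Set (ℕ → A))
    (l m : ℕ) (ℰ : Fin m → Set (ℕ → A))
    (hshift : ∀ x ∈ X, shift x ∈ X)
    (hsofic : ∀ k, l ≤ k → ∀ x ∈ X, ∀ y ∈ X,
      (pastSet X l x = pastSet X l y ↔ pastSet X k x = pastSet X k y))
    (hclass : ∀ i : Fin m, ∃ x ∈ X,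
      ℰ i = {y | y ∈ X ∧ pastSet X l y = pastSet X l x})
    (hcover : ∀ x ∈ X, ∃ i, x ∈ ℰ i)
    (hdisj : ∀ i j : Fin m, i ≠ j → Disjoint (ℰ i) (ℰ j))
    (src : KEdge X m ℰ → Fin m)
    (hsrc : ∀ e : KEdge X m ℰ, wordAct X [e.lbl] (ℰ e.rng) ⊆ ℰ (src e))
    (μ : List A) (hμ : μ ≠ []) (i : Fin m) :
    ((wordAct X μ (ℰ i)).Nonempty ↔ ∃ α, IsKPath src μ i α) ∧
    (∀ α β, IsKPath src μ i α → IsKPath src μ i β → α = β) ∧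
    (∀ α, IsKPath src μ i α → ∀ e₀ ∈ α.head?,
      wordAct X μ (ℰ i) ⊆ ℰ (src e₀)) :=
  wordAct_nonempty_iff_path_general X l m ℰ hshift hsofic hclass src hsrc μ hμ i
end

section
/- Let Λ be a subshift and let x ∈ X_Λ and a word μ with μx ∈ X_Λ. If y ∈ X_Λ is l-past equivalent to x for l ≥ |μ| + k, then every word ν of length ≤ k with νμ appearing in Λ and ν(μx) ∈ X_Λ also satisfies ν(μy) ∈ X_Λ; in particular μy ∈ X_Λ and μx ∼_k μy whenever x ∼_{k+|μ|} y. -/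
open scoped Classical

variable {A : Type*}

lemma prepend_prepend (ν μ : List A) (x : ℕ → A) :
    prepend ν (prepend μ x) = prepend (ν ++ μ) x := by
  funext n
  simp only [prepend, List.length_append, List.get_eq_getElem, List.getElem_append]
  split_ifs <;> first | rfl | omega | (congr 1; omega)

lemma mem_pastSet_prepend_iff {X : Set (ℕ → A)} {l : ℕ} {μ ν : List A} {x : ℕ → A} :
    ν ∈ pastSet X l (prepend μ x) ↔
      ν.length ≤ l ∧ ν ++ μ ∈ pastSet X (l + μ.length) x := by
  simp only [pastSet, Set.mem_ofPred_eq, prepend_prepend, List.length_append,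
    Nat.add_le_add_iff_right]
  tauto

lemma pastSet_prepend_mono {X : Set (ℕ → A)} {l : ℕ} {μ : List A} {x y : ℕ → A}
    (h : pastSet X (l + μ.length) x ⊆ pastSet X (l + μ.length) y) :
    pastSet X l (prepend μ x) ⊆ pastSet X l (prepend μ y) := fun _ hν =>
  have ⟨hlen, hmem⟩ := mem_pastSet_prepend_iff.1 hν
  mem_pastSet_prepend_iff.2 ⟨hlen, h hmem⟩

lemma pastSet_prepend_congr {X : Set (ℕ → A)} {l : ℕ} {μ : List A} {x y : ℕ → A}
    (h : pastSet X (l + μ.length) x = pastSet X (l + μ.length) y) :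
    pastSet X l (prepend μ x) = pastSet X l (prepend μ y) :=
  (pastSet_prepend_mono h.le).antisymm (pastSet_prepend_mono h.ge)

theorem past_equiv_prepend_general (X : Set (ℕ → A))
    (x y : ℕ → A) (μ : List A) (k : ℕ)
    (hμx : prepend μ x ∈ X)
    (h : pastSet X (k + μ.length) x = pastSet X (k + μ.length) y) :
    (∀ ν : List A, ν.length ≤ k → prepend ν (prepend μ x) ∈ X →
      prepend ν (prepend μ y) ∈ X) ∧
    prepend μ y ∈ X ∧
    pastSet X k (prepend μ x) = pastSet X k (prepend μ y) := by
  have hextend : ∀ ν : List A, ν.length ≤ k → prepend ν (prepend μ x) ∈ X →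
      prepend ν (prepend μ y) ∈ X := fun _ hν hνx =>
    (pastSet_prepend_mono h.le ⟨hν, hνx⟩).2
  exact ⟨hextend, hextend [] k.zero_le hμx, pastSet_prepend_congr h⟩

/-- past equivalence is compatible with prepending words: if
`μx ∈ X_Λ` and `x ∼_{k+|μ|} y`, then every `ν` with `|ν| ≤ k` and
`ν(μx) ∈ X_Λ` satisfies `ν(μy) ∈ X_Λ`; in particular `μy ∈ X_Λ` and
`μx ∼_k μy`. -/
theorem past_equiv_prepend [Fintype A] (X : Set (ℕ → A))
    (x y : ℕ → A) (hx : x ∈ X) (hy : y ∈ X) (μ : List A) (k : ℕ)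
    (hμx : prepend μ x ∈ X)
    (h : pastSet X (k + μ.length) x = pastSet X (k + μ.length) y) :
    (∀ ν : List A, ν.length ≤ k → prepend ν (prepend μ x) ∈ X →
      prepend ν (prepend μ y) ∈ X) ∧
    prepend μ y ∈ X ∧
    pastSet X k (prepend μ x) = pastSet X k (prepend μ y) :=
  past_equiv_prepend_general X x y μ k hμx h
end
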